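/- Let H be a Hopf algebra with a nonzero left integral ∫. The bilinear form b(x,y) = ∫(x S(y)) on H is balanced: b(x ↼ φ, y) = b(x, φ ⇀ y) for all φ ∈ H* and x, y ∈ H. -/

import Mathlib

open TensorProduct LinearMap

noncomputable section

variable (k : Type*) [Field k] (H : Type*) [Ring H] [HopfAlgebra k H]

/-- `∫` is a left integral on `H`: `a₁ ∫(a₂) = ∫(a) 1` for all `a`. -/
def IsLeftIntegral (I : H →ₗ[k] k) : Prop :=
  ∀ a : H, TensorProduct.rid k H (LinearMap.lTensor H I (Coalgebra.comul a)) = I a • (1 : H)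

/-- `∫` is a right integral on `H`: `∫(a₁) a₂ = ∫(a) 1` for all `a`. -/
def IsRightIntegral (I : H →ₗ[k] k) : Prop :=
  ∀ a : H, TensorProduct.lid k H (LinearMap.rTensor H I (Coalgebra.comul a)) = I a • (1 : H)

/-- The linear map `h ⊗ g ↦ ∫(h S(g))`. -/
def intPair (I : H →ₗ[k] k) : H ⊗[k] H →ₗ[k] k :=
  I ∘ₗ LinearMap.mul' k H ∘ₗ LinearMap.lTensor H (HopfAlgebra.antipode (R := k))

/-- The linear map `g ⊗ h ↦ h₁ ∫(h₂ S(g))` (the convolution product). -/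
def convMap (I : H →ₗ[k] k) : H ⊗[k] H →ₗ[k] H :=
  (TensorProduct.rid k H).toLinearMap
    ∘ₗ LinearMap.lTensor H (intPair k H I)
    ∘ₗ (TensorProduct.assoc k H H H).toLinearMap
    ∘ₗ (Coalgebra.comul (R := k)).rTensor H
    ∘ₗ (TensorProduct.comm k H H).toLinearMap

/-- The convolution product `g * h := h₁ ∫(h₂ S(g))`. -/
def convProd (I : H →ₗ[k] k) (g h : H) : H := convMap k H I (g ⊗ₜ h)

/-- The linear map `g ⊗ h ↦ ∫(h S(g₁)) g₂`. -/
def convMap' (I : H →ₗ[k] k) : H ⊗[k] H →ₗ[k] H :=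
  (TensorProduct.lid k H).toLinearMap
    ∘ₗ (intPair k H I).rTensor H
    ∘ₗ (TensorProduct.assoc k H H H).symm.toLinearMap
    ∘ₗ LinearMap.lTensor H (Coalgebra.comul (R := k))
    ∘ₗ (TensorProduct.comm k H H).toLinearMap

/-- The left hit action `φ ⇀ y := y₁ φ(y₂)`. -/
def lhit (φ : Module.Dual k H) (y : H) : H :=
  TensorProduct.rid k H (LinearMap.lTensor H φ (Coalgebra.comul y))

/-- The right hit action `x ↼ φ := φ(x₁) x₂`. -/
def rhit (x : H) (φ : Module.Dual k H) : H :=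
  TensorProduct.lid k H (LinearMap.rTensor H φ (Coalgebra.comul x))

section Aux

open Coalgebra HopfAlgebra

variable {A : Type*} [Ring A] [Algebra k A]

/-- The convolution product on linear maps `H →ₗ[k] A`. -/
def myconv (f g : H →ₗ[k] A) : H →ₗ[k] A :=
  LinearMap.mul' k A ∘ₗ TensorProduct.map f g ∘ₗ Coalgebra.comul

/-- The convolution unit. -/
def myunit : H →ₗ[k] A := Algebra.linearMap k A ∘ₗ Coalgebra.counit

lemma myconv_repr (f g : H →ₗ[k] A) (a : H) {ι : Type*} (r : Coalgebra.Repr k a ι) :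
    myconv k H f g a = ∑ i ∈ r.index, f (r.left i) * g (r.right i) := by
  simp only [myconv, LinearMap.comp_apply, ← r.eq, map_sum, TensorProduct.map_tmul,
    LinearMap.mul'_apply]

lemma sum_counit_smul (a : H) {ι : Type*} (r : Coalgebra.Repr k a ι) :
    ∑ i ∈ r.index, counit (R := k) (r.left i) • r.right i = a := by
  have := congrArg (TensorProduct.lid k H) (Coalgebra.sum_counit_tmul_eq r)
  simpa only [map_sum, TensorProduct.lid_tmul, one_smul] using this

lemma sum_smul_counit (a : H) {ι : Type*} (r : Coalgebra.Repr k a ι) :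
    ∑ i ∈ r.index, counit (R := k) (r.right i) • r.left i = a := by
  have := congrArg (TensorProduct.rid k H) (Coalgebra.sum_tmul_counit_eq r)
  simpa only [map_sum, TensorProduct.rid_tmul, one_smul] using this

lemma myconv_unit_left (f : H →ₗ[k] A) : myconv k H (myunit k H) f = f := by
  ext a
  let r := Coalgebra.Repr.arbitrary k a
  rw [myconv_repr k H _ _ a r]
  have h1 : ∑ i ∈ r.index, counit (R := k) (r.left i) • f (r.right i) = f a := by
    have := congrArg (fun z => f (TensorProduct.lid k H z)) (Coalgebra.sum_counit_tmul_eq r)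
    simpa only [map_sum, TensorProduct.lid_tmul, map_smul, one_smul] using this
  rw [← h1]
  refine Finset.sum_congr rfl fun i _ => ?_
  simp [myunit, Algebra.smul_def]

lemma myconv_unit_right (f : H →ₗ[k] A) : myconv k H f (myunit k H) = f := by
  ext a
  let r := Coalgebra.Repr.arbitrary k a
  rw [myconv_repr k H _ _ a r]
  have h1 : ∑ i ∈ r.index, counit (R := k) (r.right i) • f (r.left i) = f a := by
    have := congrArg (fun z => f (TensorProduct.rid k H z)) (Coalgebra.sum_tmul_counit_eq r)
    simpa only [map_sum, TensorProduct.rid_tmul, map_smul, one_smul] using this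
  rw [← h1]
  refine Finset.sum_congr rfl fun i _ => ?_
  rw [myunit]
  simp [Algebra.smul_def, Algebra.commutes, mul_comm]

lemma myconv_assoc (f g h : H →ₗ[k] A) :
    myconv k H (myconv k H f g) h = myconv k H f (myconv k H g h) := by
  ext a
  let r := Coalgebra.Repr.arbitrary k a
  let rL := fun i => Coalgebra.Repr.arbitrary k (r.left i)
  let rR := fun i => Coalgebra.Repr.arbitrary k (r.right i)
  rw [myconv_repr k H _ _ a r, myconv_repr k H _ _ a r]
  have key := Coalgebra.sum_map_tmul_tmul_eq (R := k) f g h a (repr := r) (a₁ := rL) (a₂ := rR)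
  apply_fun (LinearMap.mul' k A ∘ₗ LinearMap.lTensor A (LinearMap.mul' k A)) at key
  simp only [map_sum, LinearMap.comp_apply, LinearMap.lTensor_tmul, LinearMap.mul'_apply] at key
  calc ∑ i ∈ r.index, myconv k H f g (r.left i) * h (r.right i)
      = ∑ i ∈ r.index, ∑ j ∈ (rL i).index,
          f ((rL i).left j) * (g ((rL i).right j) * h (r.right i)) := by
        refine Finset.sum_congr rfl fun i _ => ?_
        rw [myconv_repr k H f g _ (rL i), Finset.sum_mul]
        simp [mul_assoc]
    _ = ∑ i ∈ r.index, ∑ j ∈ (rR i).index,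
          f (r.left i) * (g ((rR i).left j) * h ((rR i).right j)) := key.symm
    _ = ∑ i ∈ r.index, f (r.left i) * myconv k H g h (r.right i) := by
        refine Finset.sum_congr rfl fun i _ => ?_
        rw [myconv_repr k H g h _ (rR i), Finset.mul_sum]

/-- `τ ∘ (S ⊗ S) ∘ Δ`. -/
def Gmap : H →ₗ[k] H ⊗[k] H :=
  (TensorProduct.comm k H H).toLinearMap ∘ₗ TensorProduct.map (antipode k) (antipode k)
    ∘ₗ Coalgebra.comul

lemma Gmap_repr (a : H) {ι : Type*} (r : Coalgebra.Repr k a ι) :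
    Gmap k H a = ∑ i ∈ r.index,
      antipode (R := k) (r.right i) ⊗ₜ[k] antipode (R := k) (r.left i) := by
  simp only [Gmap, LinearMap.comp_apply, ← r.eq, map_sum, TensorProduct.map_tmul,
    LinearEquiv.coe_coe, TensorProduct.comm_tmul]

/-- auxiliary map `q ⊗ (u ⊗ v) ↦ (p S(v)) ⊗ (q S(u))` -/
def phi2 (p : H) : H ⊗[k] (H ⊗[k] H) →ₗ[k] H ⊗[k] H :=
  TensorProduct.map ((LinearMap.mulLeft k p) ∘ₗ antipode k)
      (LinearMap.mul' k H ∘ₗ LinearMap.lTensor H (antipode k))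
    ∘ₗ (TensorProduct.comm k (H ⊗[k] H) H).toLinearMap
    ∘ₗ (TensorProduct.assoc k H H H).symm.toLinearMap

@[simp] lemma phi2_tmul (p q u v : H) :
    phi2 k H p (q ⊗ₜ[k] (u ⊗ₜ[k] v))
      = (p * antipode (R := k) v) ⊗ₜ[k] (q * antipode (R := k) u) := by
  simp [phi2]

lemma myconv_comul_Gmap : myconv k H Coalgebra.comul (Gmap k H) = myunit k H := by
  ext a
  set r := Coalgebra.Repr.arbitrary k a with hr
  set rL := fun i => Coalgebra.Repr.arbitrary k (r.left i) with hrL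
  set rR := fun i => Coalgebra.Repr.arbitrary k (r.right i) with hrR
  set rRL := fun i j => Coalgebra.Repr.arbitrary k ((rR i).left j) with hrRL
  set rRR := fun i j => Coalgebra.Repr.arbitrary k ((rR i).right j) with hrRR
  rw [myconv_repr k H _ _ a r]
  have key1 := Coalgebra.sum_tmul_tmul_eq (R := k) r rL rR
  apply_fun (LinearMap.mul' k (H ⊗[k] H) ∘ₗ LinearMap.lTensor (H ⊗[k] H) (Gmap k H)
      ∘ₗ (TensorProduct.assoc k H H H).symm.toLinearMap) at key1
  simp only [map_sum, LinearMap.comp_apply, LinearEquiv.coe_coe, TensorProduct.assoc_symm_tmul,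
    LinearMap.lTensor_tmul, LinearMap.mul'_apply] at key1
  have h1 : ∑ i ∈ r.index, Coalgebra.comul (R := k) (r.left i) * Gmap k H (r.right i)
      = ∑ i ∈ r.index, ∑ j ∈ (rR i).index,
          (r.left i ⊗ₜ[k] (rR i).left j) * Gmap k H ((rR i).right j) := by
    rw [← key1]
    refine Finset.sum_congr rfl fun i _ => ?_
    rw [← (rL i).eq, Finset.sum_mul]
  rw [h1]
  have h2 : ∀ i ∈ r.index, ∑ j ∈ (rR i).index,
      (r.left i ⊗ₜ[k] (rR i).left j) * Gmap k H ((rR i).right j)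
      = (r.left i * antipode (R := k) (r.right i)) ⊗ₜ[k] (1 : H) := by
    intro i _
    have key2 := Coalgebra.sum_tmul_tmul_eq (R := k) (rR i) (rRL i) (rRR i)
    apply_fun (phi2 k H (r.left i)) at key2
    simp only [map_sum, phi2_tmul] at key2
    have e1 : ∑ j ∈ (rR i).index,
        (r.left i ⊗ₜ[k] (rR i).left j) * Gmap k H ((rR i).right j)
        = ∑ j ∈ (rR i).index, ∑ m ∈ (rRR i j).index,
            (r.left i * antipode (R := k) ((rRR i j).right m)) ⊗ₜ[k]
              ((rR i).left j * antipode (R := k) ((rRR i j).left m)) := by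
      refine Finset.sum_congr rfl fun j _ => ?_
      rw [Gmap_repr k H _ (rRR i j), Finset.mul_sum]
      simp [Algebra.TensorProduct.tmul_mul_tmul]
    rw [e1, ← key2]
    have e2 : ∀ j ∈ (rR i).index, ∑ n ∈ (rRL i j).index,
        (r.left i * antipode (R := k) ((rR i).right j)) ⊗ₜ[k]
          ((rRL i j).left n * antipode (R := k) ((rRL i j).right n))
        = counit (R := k) ((rR i).left j) •
            ((r.left i * antipode (R := k) ((rR i).right j)) ⊗ₜ[k] (1 : H)) := by
      intro j _
      rw [← TensorProduct.tmul_sum, HopfAlgebra.sum_mul_antipode_eq_smul (rRL i j)]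
      rw [TensorProduct.tmul_smul]
    rw [Finset.sum_congr rfl e2]
    have e3 := sum_counit_smul k H (r.right i) (rR i)
    calc ∑ j ∈ (rR i).index, counit (R := k) ((rR i).left j) •
            ((r.left i * antipode (R := k) ((rR i).right j)) ⊗ₜ[k] (1 : H))
        = ∑ j ∈ (rR i).index,
            ((r.left i * antipode (R := k) (counit (R := k) ((rR i).left j) • (rR i).right j))
              ⊗ₜ[k] (1 : H)) := by
          refine Finset.sum_congr rfl fun j _ => ?_
          rw [map_smul, mul_smul_comm, TensorProduct.smul_tmul']
      _ = (r.left i * antipode (R := k) (r.right i)) ⊗ₜ[k] (1 : H) := by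
          rw [← TensorProduct.sum_tmul, ← Finset.mul_sum, ← map_sum, e3]
  rw [Finset.sum_congr rfl h2, ← TensorProduct.sum_tmul,
    HopfAlgebra.sum_mul_antipode_eq_smul r]
  simp [myunit, Algebra.TensorProduct.one_def, TensorProduct.smul_tmul',
    Algebra.algebraMap_eq_smul_one]

lemma myconv_antipode_comul :
    myconv k H (Coalgebra.comul ∘ₗ antipode (R := k)) Coalgebra.comul = myunit k H := by
  ext a
  let r := Coalgebra.Repr.arbitrary k a
  rw [myconv_repr k H _ _ a r]
  have h1 : ∀ i ∈ r.index,
      (Coalgebra.comul ∘ₗ antipode (R := k)) (r.left i) * Coalgebra.comul (r.right i)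
      = Coalgebra.comul (R := k) (antipode (R := k) (r.left i) * r.right i) := by
    intro i _
    simp [Bialgebra.comul_mul]
  rw [Finset.sum_congr rfl h1, ← map_sum, HopfAlgebra.sum_antipode_mul_eq_smul r]
  simp [myunit, Algebra.algebraMap_eq_smul_one]

lemma comul_antipode_eq_Gmap :
    Coalgebra.comul ∘ₗ antipode (R := k) = Gmap k H := by
  calc Coalgebra.comul ∘ₗ antipode (R := k)
      = myconv k H (Coalgebra.comul ∘ₗ antipode (R := k)) (myunit k H) :=
        (myconv_unit_right k H _).symm
    _ = myconv k H (Coalgebra.comul ∘ₗ antipode (R := k))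
          (myconv k H Coalgebra.comul (Gmap k H)) := by rw [myconv_comul_Gmap]
    _ = myconv k H (myconv k H (Coalgebra.comul ∘ₗ antipode (R := k)) Coalgebra.comul)
          (Gmap k H) := (myconv_assoc k H _ _ _).symm
    _ = myconv k H (myunit k H) (Gmap k H) := by rw [myconv_antipode_comul]
    _ = Gmap k H := myconv_unit_left k H _

/-- The antipode is an anti-coalgebra morphism. -/
lemma comul_antipode (a : H) {ι : Type*} (r : Coalgebra.Repr k a ι) :
    Coalgebra.comul (R := k) (antipode (R := k) a)
      = ∑ i ∈ r.index, antipode (R := k) (r.right i) ⊗ₜ[k] antipode (R := k) (r.left i) := by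
  have := LinearMap.congr_fun (comul_antipode_eq_Gmap k H) a
  rw [LinearMap.comp_apply] at this
  rw [this, Gmap_repr k H a r]

end Aux

/-- For a Hopf algebra `H` with nonzero left integral `∫`, the bilinear form
`b(x,y) = ∫(x S(y))` is balanced: `b(x ↼ φ, y) = b(x, φ ⇀ y)` for all `φ ∈ H*`, `x, y ∈ H`. -/
theorem integral_form_balanced (I : H →ₗ[k] k) (hI : IsLeftIntegral k H I) (hne : I ≠ 0) :
    ∀ (φ : Module.Dual k H) (x y : H),
      I (rhit k H x φ * HopfAlgebra.antipode (R := k) y)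
        = I (x * HopfAlgebra.antipode (R := k) (lhit k H φ y)) := by
  intro φ x y
  classical
  set S : H →ₗ[k] H := HopfAlgebra.antipode (R := k) with hS
  set rx := Coalgebra.Repr.arbitrary k x with hrx
  set ry := Coalgebra.Repr.arbitrary k y with hry
  set ryL := fun j => Coalgebra.Repr.arbitrary k (ry.left j) with hryL
  set ryR := fun j => Coalgebra.Repr.arbitrary k (ry.right j) with hryR
  -- step 1 : unfold rhit and lhit
  have hrhit : rhit k H x φ = ∑ i ∈ rx.index, φ (rx.left i) • rx.right i := by
    rw [rhit, ← rx.eq]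
    simp [map_sum]
  have hlhit : lhit k H φ y = ∑ j ∈ ry.index, φ (ry.right j) • ry.left j := by
    rw [lhit, ← ry.eq]
    simp [map_sum]
  have hLHS : I (rhit k H x φ * S y)
      = ∑ i ∈ rx.index, I (rx.right i * S y) * φ (rx.left i) := by
    rw [hrhit, Finset.sum_mul, map_sum]
    refine Finset.sum_congr rfl fun i _ => ?_
    rw [smul_mul_assoc, map_smul, smul_eq_mul, mul_comm]
  have hRHS : I (x * S (lhit k H φ y))
      = ∑ j ∈ ry.index, I (x * S (ry.left j)) * φ (ry.right j) := by
    rw [hlhit, map_sum, Finset.mul_sum, map_sum]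
    refine Finset.sum_congr rfl fun j _ => ?_
    rw [map_smul, mul_smul_comm, map_smul, smul_eq_mul, mul_comm]
  rw [hLHS, hRHS]
  -- the key identity in H
  have key : ∑ i ∈ rx.index, I (rx.right i * S y) • rx.left i
      = ∑ j ∈ ry.index, I (x * S (ry.left j)) • ry.right j := by
    -- step 2 : the integral property on x * S(y₁)
    have eq1 : ∀ j ∈ ry.index, (I (x * S (ry.left j)) : k) • (1 : H)
        = ∑ i ∈ rx.index, ∑ n ∈ (ryL j).index,
            I (rx.right i * S ((ryL j).left n)) • (rx.left i * S ((ryL j).right n)) := by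
      intro j _
      have hc : Coalgebra.comul (R := k) (x * S (ry.left j))
          = ∑ i ∈ rx.index, ∑ n ∈ (ryL j).index,
              (rx.left i * S ((ryL j).right n)) ⊗ₜ[k] (rx.right i * S ((ryL j).left n)) := by
        rw [Bialgebra.comul_mul, hS, comul_antipode k H _ (ryL j), ← rx.eq,
          Finset.sum_mul_sum]
        simp [Algebra.TensorProduct.tmul_mul_tmul]
      have := hI (x * S (ry.left j))
      rw [hc] at this
      rw [← this]
      simp [map_sum]
    -- step 3 : sum against y₂ and use coassociativity
    have step2 : ∑ j ∈ ry.index, I (x * S (ry.left j)) • ry.right j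
        = ∑ i ∈ rx.index, ∑ j ∈ ry.index, ∑ n ∈ (ryL j).index,
            I (rx.right i * S ((ryL j).left n)) •
              (rx.left i * S ((ryL j).right n) * ry.right j) := by
      rw [Finset.sum_comm]
      refine Finset.sum_congr rfl fun j hj => ?_
      calc I (x * S (ry.left j)) • ry.right j
          = (I (x * S (ry.left j)) • (1 : H)) * ry.right j := by
            rw [smul_mul_assoc, one_mul]
        _ = _ := by
            rw [eq1 j hj, Finset.sum_mul]
            refine Finset.sum_congr rfl fun i _ => ?_
            rw [Finset.sum_mul]
            refine Finset.sum_congr rfl fun n _ => ?_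
            rw [smul_mul_assoc]
    rw [step2]
    refine Finset.sum_congr rfl fun i _ => ?_
    -- step 4 : coassociativity exchange for y, for fixed i
    have key3 := Coalgebra.sum_tmul_tmul_eq (R := k) ry ryL ryR
    apply_fun ((TensorProduct.lid k H).toLinearMap ∘ₗ
      TensorProduct.map (I ∘ₗ LinearMap.mulLeft k (rx.right i) ∘ₗ S)
        (LinearMap.mul' k H ∘ₗ
          LinearMap.rTensor H (LinearMap.mulLeft k (rx.left i) ∘ₗ S))) at key3
    simp only [map_sum, LinearMap.comp_apply, TensorProduct.map_tmul, LinearEquiv.coe_coe,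
      LinearMap.rTensor_tmul, LinearMap.mul'_apply, TensorProduct.lid_tmul,
      LinearMap.mulLeft_apply] at key3
    rw [key3]
    -- contract the antipode pair S(y₂₁) y₂₂ = ε(y₂) 1
    have e4 : ∀ j ∈ ry.index, ∑ m ∈ (ryR j).index,
        I (rx.right i * S (ry.left j)) •
          (rx.left i * S ((ryR j).left m) * (ryR j).right m)
        = Coalgebra.counit (R := k) (ry.right j) •
            (I (rx.right i * S (ry.left j)) • rx.left i) := by
      intro j _
      rw [← Finset.smul_sum]
      have : ∑ m ∈ (ryR j).index, rx.left i * S ((ryR j).left m) * (ryR j).right m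
          = Coalgebra.counit (R := k) (ry.right j) • rx.left i := by
        calc ∑ m ∈ (ryR j).index, rx.left i * S ((ryR j).left m) * (ryR j).right m
            = rx.left i * ∑ m ∈ (ryR j).index, S ((ryR j).left m) * (ryR j).right m := by
              rw [Finset.mul_sum]
              exact Finset.sum_congr rfl fun m _ => mul_assoc _ _ _
          _ = _ := by
              rw [hS, HopfAlgebra.sum_antipode_mul_eq_smul (ryR j), mul_smul_comm, mul_one]
      rw [this, smul_comm]
    rw [Finset.sum_congr rfl e4]
    -- contract the counit
    have e5 : ∑ j ∈ ry.index, Coalgebra.counit (R := k) (ry.right j) •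
        (I (rx.right i * S (ry.left j)) • rx.left i)
        = I (rx.right i * S y) • rx.left i := by
      have hy := sum_smul_counit k H y ry
      calc ∑ j ∈ ry.index, Coalgebra.counit (R := k) (ry.right j) •
            (I (rx.right i * S (ry.left j)) • rx.left i)
          = ∑ j ∈ ry.index,
              I (rx.right i * S (Coalgebra.counit (R := k) (ry.right j) • ry.left j)) •
                rx.left i := by
            refine Finset.sum_congr rfl fun j _ => ?_
            rw [map_smul, mul_smul_comm, map_smul, smul_smul, smul_eq_mul]
        _ = I (rx.right i * S y) • rx.left i := by
            rw [← Finset.sum_smul, ← map_sum]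
            rw [show ∑ j ∈ ry.index,
              rx.right i * S (Coalgebra.counit (R := k) (ry.right j) • ry.left j)
              = rx.right i * S (∑ j ∈ ry.index,
                  Coalgebra.counit (R := k) (ry.right j) • ry.left j) by
                rw [← Finset.mul_sum, ← map_sum]]
            rw [hy]
    rw [e5]
  -- conclude by applying φ to the key identity
  have := congrArg φ key
  simpa only [map_sum, map_smul, smul_eq_mul] using this

end
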